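/- arXiv:1909.11086 — 2 statements merged into one kernel-verified Lean document; each statement's English description precedes it below -/
import Mathlib

section
/- Let ε ≥ 0 be a real number, and let p, p' : Fin n → ℕ be two processing-time vectors such that (1+ε)·(p' j) ≥ p j for every job j. Then for every assignment μ : Fin n → Fin m, the early works with respect to p' and p satisfy (1+ε)·X_{p'}(μ) ≥ X_p(μ), and hence X_{p'}(μ) ≥ (1−ε)·X_p(μ). -/
open Finset

/-- The load of machine `i` under assignment `μ` with processing times `q`. -/
def machineLoad {n m : ℕ} (q : Fin n → ℕ) (μ : Fin n → Fin m) (i : Fin m) : ℕ :=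
  ∑ j ∈ univ.filter (fun j => μ j = i), q j

/-- The early work `X_q(μ)` with common due date `d` and processing times `q`. -/
def earlyWork {n m : ℕ} (q : Fin n → ℕ) (d : ℕ) (μ : Fin n → Fin m) : ℕ :=
  ∑ i : Fin m, min (machineLoad q μ i) d

/-- if `(1+ε)·p' j ≥ p j` for every job `j`, then for every assignment `μ`
we have `(1+ε)·X_{p'}(μ) ≥ X_p(μ)`, and hence `X_{p'}(μ) ≥ (1−ε)·X_p(μ)`. -/
theorem earlyWork_rounded_lower_bound {n m : ℕ} (d : ℕ) (ε : ℝ) (hε : 0 ≤ ε)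
    (p p' : Fin n → ℕ) (h : ∀ j, (p j : ℝ) ≤ (1 + ε) * (p' j : ℝ))
    (μ : Fin n → Fin m) :
    (earlyWork p d μ : ℝ) ≤ (1 + ε) * (earlyWork p' d μ : ℝ) ∧
    (1 - ε) * (earlyWork p d μ : ℝ) ≤ (earlyWork p' d μ : ℝ) := by
  have h1 : (0:ℝ) ≤ 1 + ε := by linarith
  have hload : ∀ i, (machineLoad p μ i : ℝ) ≤ (1 + ε) * (machineLoad p' μ i : ℝ) := by
    intro i
    unfold machineLoad
    push_cast
    rw [Finset.mul_sum]
    exact Finset.sum_le_sum fun j _ => h j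
  have hmin : ∀ i : Fin m, ((min (machineLoad p μ i) d : ℕ) : ℝ) ≤
      (1 + ε) * ((min (machineLoad p' μ i) d : ℕ) : ℝ) := by
    intro i
    push_cast
    rcases le_total ((machineLoad p' μ i : ℝ)) (d : ℝ) with hc | hc
    · rw [min_eq_left hc]
      calc (min (machineLoad p μ i : ℝ) d) ≤ (machineLoad p μ i : ℝ) := min_le_left _ _
        _ ≤ (1 + ε) * (machineLoad p' μ i : ℝ) := hload i
    · rw [min_eq_right hc]
      calc (min (machineLoad p μ i : ℝ) d) ≤ (d : ℝ) := min_le_right _ _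
        _ ≤ (1 + ε) * (d : ℝ) := by nlinarith [Nat.cast_nonneg (α := ℝ) d]
  have main : (earlyWork p d μ : ℝ) ≤ (1 + ε) * (earlyWork p' d μ : ℝ) := by
    unfold earlyWork
    push_cast
    rw [Finset.mul_sum]
    refine Finset.sum_le_sum fun i _ => ?_
    have := hmin i
    push_cast at this
    exact this
  refine ⟨main, ?_⟩
  have hX : (0:ℝ) ≤ (earlyWork p d μ : ℝ) := Nat.cast_nonneg _
  have hX' : (0:ℝ) ≤ (earlyWork p' d μ : ℝ) := Nat.cast_nonneg _
  rcases le_total ε 1 with hε1 | hε1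
  · nlinarith [mul_le_mul_of_nonneg_left main (by linarith : (0:ℝ) ≤ 1 - ε),
      mul_nonneg (mul_nonneg hε hε) hX']
  · nlinarith
end

section
/- Let ε ≥ 0 and c > 0 be real numbers, and let p, p' : Fin n → ℕ be two processing-time vectors with p j ≤ p' j for every j and Σ_j (p' j − p j) ≤ ε·p_sum, where p_sum = Σ_j p j. Then for every assignment μ : Fin n → Fin m, the late works with respect to p' and p satisfy Y_{p'}(μ) ≤ Y_p(μ) + ε·p_sum, and consequently c·p_sum + Y_{p'}(μ) ≤ (1 + ε/c)·(c·p_sum + Y_p(μ)). -/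
open Finset

/-- The late work `Y_q(μ)` with common due date `d` and processing times `q`. -/
def lateWork {n m : ℕ} (q : Fin n → ℕ) (d : ℕ) (μ : Fin n → Fin m) : ℕ :=
  ∑ i : Fin m, (machineLoad q μ i - d)

/-- if `p ≤ p'` pointwise and the total rounding increase is at most
`ε·p_sum`, then for every assignment `μ`, `Y_{p'}(μ) ≤ Y_p(μ) + ε·p_sum`, and consequently
`c·p_sum + Y_{p'}(μ) ≤ (1 + ε/c)·(c·p_sum + Y_p(μ))`. -/
theorem lateWork_rounded_upper_bound {n m : ℕ} (d : ℕ) (ε c : ℝ)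
    (hε : 0 ≤ ε) (hc : 0 < c)
    (p p' : Fin n → ℕ) (hle : ∀ j, p j ≤ p' j)
    (hsum : ((∑ j, (p' j - p j) : ℕ) : ℝ) ≤ ε * ((∑ j, p j : ℕ) : ℝ))
    (μ : Fin n → Fin m) :
    (lateWork p' d μ : ℝ) ≤ (lateWork p d μ : ℝ) + ε * ((∑ j, p j : ℕ) : ℝ) ∧
    c * ((∑ j, p j : ℕ) : ℝ) + (lateWork p' d μ : ℝ) ≤
      (1 + ε / c) * (c * ((∑ j, p j : ℕ) : ℝ) + (lateWork p d μ : ℝ)) := by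
  have hload : ∀ i, machineLoad p μ i ≤ machineLoad p' μ i := fun i =>
    Finset.sum_le_sum fun j _ => hle j
  have hkey : lateWork p' d μ ≤ lateWork p d μ + ∑ j, (p' j - p j) := by
    have hdiff : ∑ i : Fin m, (machineLoad p' μ i - machineLoad p μ i)
        = ∑ j, (p' j - p j) := by
      have : ∀ i : Fin m, machineLoad p' μ i - machineLoad p μ i
          = ∑ j ∈ univ.filter (fun j => μ j = i), (p' j - p j) := by
        intro i
        unfold machineLoad
        rw [Finset.sum_tsub_distrib _ (fun j _ => hle j)]
      simp_rw [this]
      rw [← Finset.sum_fiberwise (g := μ)]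
    calc lateWork p' d μ
        ≤ ∑ i : Fin m, ((machineLoad p μ i - d) + (machineLoad p' μ i - machineLoad p μ i)) := by
          apply Finset.sum_le_sum
          intro i _
          omega
      _ = lateWork p d μ + ∑ j, (p' j - p j) := by
          rw [Finset.sum_add_distrib, hdiff]; rfl
  have h1 : (lateWork p' d μ : ℝ) ≤ (lateWork p d μ : ℝ) + ε * ((∑ j, p j : ℕ) : ℝ) := by
    calc (lateWork p' d μ : ℝ) ≤ ((lateWork p d μ + ∑ j, (p' j - p j) : ℕ) : ℝ) := by
          exact_mod_cast hkey
      _ = (lateWork p d μ : ℝ) + ((∑ j, (p' j - p j) : ℕ) : ℝ) := by push_cast; ring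
      _ ≤ _ := by linarith
  refine ⟨h1, ?_⟩
  have hY : (0 : ℝ) ≤ (lateWork p d μ : ℝ) := Nat.cast_nonneg _
  have hps : (0 : ℝ) ≤ ((∑ j, p j : ℕ) : ℝ) := Nat.cast_nonneg _
  have : ε * ((∑ j, p j : ℕ) : ℝ) ≤ (ε / c) * (c * ((∑ j, p j : ℕ) : ℝ) + (lateWork p d μ : ℝ)) := by
    rw [div_mul_eq_mul_div, le_div_iff₀ hc]
    nlinarith
  nlinarith
end
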